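/- Let A, B, C ⊆ ℕ. If A is separable by some rotation from B and A is separable by some rotation from C, then A is separable by some rotation from B ∪ C. -/
import Mathlib


/-- Two sets `A, B ⊆ ℕ` are separable by some rotation if there are `d ∈ ℕ` and
`α ∈ (ℝ/ℤ)^d` such that the closures of `Aα` and `Bα` in `(ℝ/ℤ)^d` are disjoint. -/
def SeparableByRotation (A B : Set ℕ) : Prop :=
  ∃ (d : ℕ) (α : Fin d → AddCircle (1 : ℝ)),
    Disjoint (closure ((fun a : ℕ => a • α) '' A)) (closure ((fun b : ℕ => b • α) '' B))

lemma proj_closure {d e : ℕ} (γ : Fin d → AddCircle (1 : ℝ)) (α : Fin e → AddCircle (1 : ℝ))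
    (p : (Fin d → AddCircle (1 : ℝ)) → (Fin e → AddCircle (1 : ℝ))) (hp : Continuous p)
    (hpa : ∀ n : ℕ, p (n • γ) = n • α) (S : Set ℕ) {x}
    (hx : x ∈ closure ((fun a : ℕ => a • γ) '' S)) :
    p x ∈ closure ((fun a : ℕ => a • α) '' S) := by
  refine map_mem_closure hp hx ?_
  rintro y ⟨n, hn, rfl⟩
  exact ⟨n, hn, (hpa n).symm⟩

/-- If `A` is separable from `B` and from `C`, then `A` is separable from `B ∪ C`. -/
theorem separable_union (A B C : Set ℕ)
    (hAB : SeparableByRotation A B) (hAC : SeparableByRotation A C) :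
    SeparableByRotation A (B ∪ C) := by
  obtain ⟨d₁, α, h₁⟩ := hAB
  obtain ⟨d₂, β, h₂⟩ := hAC
  refine ⟨d₁ + d₂, Fin.append α β, ?_⟩
  rw [Set.image_union, closure_union, Set.disjoint_union_right]
  have hL : ∀ n : ℕ, (fun f : Fin (d₁+d₂) → AddCircle (1:ℝ) => fun i => f (Fin.castAdd d₂ i))
      (n • Fin.append α β) = n • α := by
    intro n; funext i; simp [Fin.append_left]
  have hR : ∀ n : ℕ, (fun f : Fin (d₁+d₂) → AddCircle (1:ℝ) => fun i => f (Fin.natAdd d₁ i))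
      (n • Fin.append α β) = n • β := by
    intro n; funext i; simp [Fin.append_right]
  have cL : Continuous (fun f : Fin (d₁+d₂) → AddCircle (1:ℝ) => fun i => f (Fin.castAdd d₂ i)) :=
    continuous_pi fun i => continuous_apply _
  have cR : Continuous (fun f : Fin (d₁+d₂) → AddCircle (1:ℝ) => fun i => f (Fin.natAdd d₁ i)) :=
    continuous_pi fun i => continuous_apply _
  constructor
  · rw [Set.disjoint_left]
    intro x hxA hxB
    exact Set.disjoint_left.mp h₁ (proj_closure _ _ _ cL hL A hxA)
      (proj_closure _ _ _ cL hL B hxB)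
  · rw [Set.disjoint_left]
    intro x hxA hxC
    exact Set.disjoint_left.mp h₂ (proj_closure _ _ _ cR hR A hxA)
      (proj_closure _ _ _ cR hR C hxC)
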